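/- Let W_p act on a quadratic form by [a,b,c]∘W_p = [pc, −b, a/p] (when p divides a). For a prime p and discriminant −d with p ∤ d, the natural map from Γ₀(p)-orbits of forms [a,b,c] with p | a and b ≡ h (mod 2p) (where h² ≡ −d mod 4p) to Γ₀*(p)-orbits of forms [a,b,c] with p | a is a bijection. -/

import Mathlib

/-!
Since `W_p` normalizes `Γ₀(p)` and `W_p²` acts trivially on forms, `Q'` is `Γ₀*(p)`-equivalent
to `Q` iff `Q' ∈ Q ∘ Γ₀(p)` or `Q' ∈ W_p(Q) ∘ Γ₀(p)`. Now `Γ₀(p)` preserves `b mod 2p` while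
`W_p` negates it, and `b² ≡ -d (mod 4p)` forces `b ≡ ±h (mod 2p)`, where `h ≢ -h` because
`p ∤ d`. So the second alternative never links two forms with `b ≡ h` (injectivity), and `W_p`
carries a form with `b ≡ -h` to one with `b ≡ h` (surjectivity).
-/

/-- A binary quadratic form `[a,b,c]` encoded as `(a, b, c) : ℤ × ℤ × ℤ`. -/
abbrev BQF : Type := ℤ × ℤ × ℤ

abbrev SL2Z : Type := Matrix.SpecialLinearGroup (Fin 2) ℤ

/-- The substitution action `(Q ∘ γ)(x,y) = Q(Ax + By, Cx + Dy)`. -/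
def bqfAct (Q : BQF) (γ : SL2Z) : BQF :=
  let A := γ.1 0 0; let B := γ.1 0 1; let C := γ.1 1 0; let D := γ.1 1 1
  (Q.1 * A ^ 2 + Q.2.1 * A * C + Q.2.2 * C ^ 2,
   2 * Q.1 * A * B + Q.2.1 * (A * D + B * C) + 2 * Q.2.2 * C * D,
   Q.1 * B ^ 2 + Q.2.1 * B * D + Q.2.2 * D ^ 2)

/-- Forms in `Q_{d,p,h}`: positive definite, discriminant `-d`, `p ∣ a`, `b ≡ h (mod 2p)`. -/
def QDPH (d p h : ℤ) : Type :=
  {Q : BQF // 0 < Q.1 ∧ Q.2.1 ^ 2 - 4 * Q.1 * Q.2.2 = -d ∧ p ∣ Q.1 ∧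
    Q.2.1 ≡ h [ZMOD 2 * p]}

/-- Forms in `Q_{d,p}`: positive definite, discriminant `-d`, `p ∣ a`. -/
def QDP (d p : ℤ) : Type :=
  {Q : BQF // 0 < Q.1 ∧ Q.2.1 ^ 2 - 4 * Q.1 * Q.2.2 = -d ∧ p ∣ Q.1}

/-- `Γ₀(p)`-equivalence: related by some `γ ∈ SL₂(ℤ)` with lower-left entry divisible by `p`. -/
def gamma0Rel (d p h : ℤ) (Q Q' : QDPH d p h) : Prop :=
  ∃ γ : SL2Z, (p ∣ γ.1 1 0) ∧ bqfAct Q.1 γ = Q'.1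

/-- One step of the Fricke group action on `Q_{d,p}`: either a `Γ₀(p)`-substitution, or the
Fricke involution `[a,b,c] ∘ W_p = [pc, -b, a/p]`. -/
def frickeStep (d p : ℤ) (Q Q' : QDP d p) : Prop :=
  (∃ γ : SL2Z, (p ∣ γ.1 1 0) ∧ bqfAct Q.1 γ = Q'.1) ∨
  (Q'.1.1 = p * Q.1.2.2 ∧ Q'.1.2.1 = -Q.1.2.1 ∧ p * Q'.1.2.2 = Q.1.1)

/-- `Γ₀*(p)`-equivalence on `Q_{d,p}`: the equivalence relation generated by `frickeStep`. -/
def frickeRel (d p : ℤ) : QDP d p → QDP d p → Prop :=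
  Relation.EqvGen (frickeStep d p)

open CongruenceSubgroup

theorem mem_Gamma0_iff_dvd {N : ℕ} {γ : SL2Z} : γ ∈ Gamma0 N ↔ (N : ℤ) ∣ γ 1 0 :=
  Gamma0_mem.trans (ZMod.intCast_zmod_eq_zero_iff_dvd _ _)

theorem bqfAct_one (Q : BQF) : bqfAct Q 1 = Q := by
  simp [bqfAct]

theorem bqfAct_mul (Q : BQF) (γ δ : SL2Z) : bqfAct (bqfAct Q γ) δ = bqfAct Q (γ * δ) := by
  simp only [bqfAct, Matrix.SpecialLinearGroup.coe_mul, Matrix.mul_apply, Fin.sum_univ_two,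
    Prod.mk.injEq]
  exact ⟨by ring, by ring, by ring⟩

def bqfOrbitRel (H : Subgroup SL2Z) (Q Q' : BQF) : Prop :=
  ∃ γ ∈ H, bqfAct Q γ = Q'

theorem bqfOrbitRel_equivalence (H : Subgroup SL2Z) : Equivalence (bqfOrbitRel H) where
  refl Q := ⟨1, H.one_mem, bqfAct_one Q⟩
  symm := by
    rintro Q _ ⟨γ, hγ, rfl⟩
    exact ⟨γ⁻¹, H.inv_mem hγ, by rw [bqfAct_mul, mul_inv_cancel, bqfAct_one]⟩
  trans := by
    rintro Q _ _ ⟨γ, hγ, rfl⟩ ⟨δ, hδ, rfl⟩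
    exact ⟨γ * δ, H.mul_mem hγ hδ, (bqfAct_mul Q γ δ).symm⟩

theorem snd_modEq_of_bqfOrbitRel {p : ℕ} {Q Q' : BQF} (hQ : (p : ℤ) ∣ Q.1)
    (hQQ' : bqfOrbitRel (Gamma0 p) Q Q') : Q'.2.1 ≡ Q.2.1 [ZMOD 2 * p] := by
  obtain ⟨γ, hγ, rfl⟩ := hQQ'
  obtain ⟨C, hC⟩ := mem_Gamma0_iff_dvd.mp hγ
  obtain ⟨a, ha⟩ := hQ
  have hdet : γ 0 0 * γ 1 1 - γ 0 1 * γ 1 0 = 1 := (Matrix.det_fin_two _).symm.trans γ.det_coe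
  refine Int.modEq_iff_dvd.mpr ⟨-(a * γ 0 0 * γ 0 1 + Q.2.1 * γ 0 1 * C + Q.2.2 * C * γ 1 1), ?_⟩
  simp only [bqfAct, ha, hC]
  linear_combination (-Q.2.1) * hdet - Q.2.1 * γ 0 1 * hC

/-- `[a,b,c] ∘ W_p = [pc, -b, a/p]`; the division truncates unless `p ∣ a`. -/
def fricke (p : ℤ) (Q : BQF) : BQF := (p * Q.2.2, -Q.2.1, Q.1 / p)

theorem fricke_fricke {p : ℤ} (hp : p ≠ 0) {Q : BQF} (hQ : p ∣ Q.1) :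
    fricke p (fricke p Q) = Q := by
  obtain ⟨a, b, c⟩ := Q
  simp only [fricke, Int.mul_ediv_cancel' hQ, neg_neg, Int.mul_ediv_cancel_left _ hp]

theorem bqfOrbitRel.fricke {p : ℕ} (hp : p ≠ 0) {Q Q' : BQF} (hQ : (p : ℤ) ∣ Q.1)
    (hQQ' : bqfOrbitRel (Gamma0 p) Q Q') :
    bqfOrbitRel (Gamma0 p) (fricke p Q) (fricke p Q') := by
  obtain ⟨γ, hγ, rfl⟩ := hQQ'
  obtain ⟨C, hC⟩ := mem_Gamma0_iff_dvd.mp hγ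
  obtain ⟨a, ha⟩ := hQ
  have hdet : γ 0 0 * γ 1 1 - γ 0 1 * γ 1 0 = 1 := (Matrix.det_fin_two _).symm.trans γ.det_coe
  have hp' : (p : ℤ) ≠ 0 := by exact_mod_cast hp
  have hfst : (bqfAct Q γ).1 = p * (a * γ 0 0 ^ 2 + Q.2.1 * γ 0 0 * C + Q.2.2 * C ^ 2 * p) := by
    simp only [bqfAct, ha, hC]; ring
  -- the conjugate `W_p⁻¹ γ W_p`
  refine ⟨⟨!![γ 1 1, -C; -(p * γ 0 1), γ 0 0], ?_⟩, ?_, ?_⟩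
  · rw [Matrix.det_fin_two_of]; linear_combination hdet + γ 0 1 * hC
  · exact mem_Gamma0_iff_dvd.mpr (dvd_neg.mpr (dvd_mul_right _ _))
  · conv_rhs => rw [_root_.fricke, hfst, Int.mul_ediv_cancel_left _ hp']
    simp only [_root_.fricke, bqfAct, ha, hC, Int.mul_ediv_cancel_left _ hp', Matrix.of_apply,
      Matrix.cons_val', Matrix.cons_val_zero, Matrix.cons_val_one, Matrix.empty_val',
      Matrix.cons_val_fin_one, Prod.mk.injEq]
    exact ⟨by ring, by ring, by ring⟩

theorem modEq_or_modEq_neg_of_sq_modEq_sq {p b h : ℤ} (hp : Prime p)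
    (hbh : b ^ 2 ≡ h ^ 2 [ZMOD 4 * p]) : b ≡ h [ZMOD 2 * p] ∨ b ≡ -h [ZMOD 2 * p] := by
  obtain ⟨k, hk⟩ := hbh.symm.dvd
  obtain ⟨u, hu⟩ : (2 : ℤ) ∣ b - h := by
    have h2bh : (2 : ℤ) ∣ (b - h) * (b + h) := ⟨2 * p * k, by linear_combination hk⟩
    rcases Int.prime_two.dvd_mul.mp h2bh with h2 | h2
    · exact h2
    · simpa [two_mul, sub_eq_add_neg, add_assoc] using h2.sub (dvd_mul_right 2 h)
  have hpu : p ∣ u * (u + h) :=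
    ⟨k, mul_left_cancel₀ four_ne_zero (by linear_combination hk - (b + h + 2 * u) * hu)⟩
  rcases hp.dvd_mul.mp hpu with ⟨m, hm⟩ | ⟨m, hm⟩
  · exact .inl (Int.modEq_iff_dvd.mpr ⟨-m, by linear_combination -hu - 2 * hm⟩)
  · exact .inr (Int.modEq_iff_dvd.mpr ⟨-m, by linear_combination -hu - 2 * hm⟩)

theorem dvd_of_sq_modEq_neg_of_modEq_neg {p h d : ℤ} (hh : h ^ 2 ≡ -d [ZMOD 4 * p])
    (hneg : h ≡ -h [ZMOD 2 * p]) : p ∣ d := by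
  obtain ⟨k, hk⟩ := hneg.dvd
  obtain ⟨m, hm⟩ := hh.dvd
  obtain rfl : h = -(p * k) := by linarith
  exact ⟨-4 * m - p * k ^ 2, by linear_combination -hm⟩

section QDP

variable {d h : ℤ} {p : ℕ}

def QDPH.toQDP (Q : QDPH d p h) : QDP d p := ⟨Q.1, Q.2.1, Q.2.2.1, Q.2.2.2.1⟩

def QDP.toQDPH (Q : QDP d p) (hb : Q.1.2.1 ≡ h [ZMOD 2 * p]) : QDPH d p h :=
  ⟨Q.1, Q.2.1, Q.2.2.1, Q.2.2.2, hb⟩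

theorem QDP.snd_modEq_or_modEq_neg (hp : p.Prime) (hh : h ^ 2 ≡ -d [ZMOD 4 * p])
    (Q : QDP d p) : Q.1.2.1 ≡ h [ZMOD 2 * p] ∨ Q.1.2.1 ≡ -h [ZMOD 2 * p] := by
  obtain ⟨⟨a, b, c⟩, -, hdisc, a₀, ha⟩ := Q
  dsimp only at ha hdisc ⊢
  subst ha
  exact modEq_or_modEq_neg_of_sq_modEq_sq (Nat.prime_iff_prime_int.mp hp)
    ((Int.modEq_iff_dvd.mpr ⟨-(a₀ * c), by linear_combination -hdisc⟩).trans hh.symm)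

def QDP.fricke (hp : 0 < p) (hd : 0 < d) (Q : QDP d p) : QDP d p :=
  ⟨_root_.fricke p Q.1, by
    obtain ⟨ha, hdisc, a₀, ha₀⟩ := Q.2
    have hp' : (p : ℤ) ≠ 0 := by positivity
    have hc : 0 < Q.1.2.2 := by nlinarith
    simp only [_root_.fricke, ha₀, Int.mul_ediv_cancel_left _ hp']
    exact ⟨by positivity, by linear_combination hdisc + 4 * Q.1.2.2 * ha₀, dvd_mul_right _ _⟩⟩

theorem QDP.frickeStep_fricke (hp : 0 < p) (hd : 0 < d) (Q : QDP d p) :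
    frickeStep d p Q (Q.fricke hp hd) :=
  .inr ⟨rfl, rfl, Int.mul_ediv_cancel' Q.2.2.2⟩

def frickeOrbitRel (d : ℤ) (p : ℕ) (Q Q' : QDP d p) : Prop :=
  bqfOrbitRel (Gamma0 p) Q.1 Q'.1 ∨ bqfOrbitRel (Gamma0 p) (fricke p Q.1) Q'.1

theorem frickeOrbitRel_equivalence (hp : p ≠ 0) : Equivalence (frickeOrbitRel d p) := by
  have E := bqfOrbitRel_equivalence (Gamma0 p)
  have hp' : (p : ℤ) ≠ 0 := by exact_mod_cast hp
  refine ⟨fun Q => .inl (E.refl _), ?_, ?_⟩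
  · rintro Q Q' (hQQ' | hQQ')
    · exact .inl (E.symm hQQ')
    · have := (E.symm hQQ').fricke hp Q'.2.2.2
      rw [fricke_fricke hp' Q.2.2.2] at this
      exact .inr this
  · rintro Q Q' Q'' (hQQ' | hQQ') (hQ'Q'' | hQ'Q'')
    · exact .inl (E.trans hQQ' hQ'Q'')
    · exact .inr (E.trans (hQQ'.fricke hp Q.2.2.2) hQ'Q'')
    · exact .inr (E.trans hQQ' hQ'Q'')
    · have := hQQ'.fricke hp (dvd_mul_right _ _)
      rw [fricke_fricke hp' Q.2.2.2] at this
      exact .inl (E.trans this hQ'Q'')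

theorem frickeOrbitRel_of_frickeStep (hp : p ≠ 0) {Q Q' : QDP d p}
    (hQQ' : frickeStep d p Q Q') : frickeOrbitRel d p Q Q' := by
  rcases hQQ' with ⟨γ, hγ, hQQ'⟩ | ⟨ha, hb, hc⟩
  · exact .inl ⟨γ, mem_Gamma0_iff_dvd.mpr hγ, hQQ'⟩
  · have hp' : (p : ℤ) ≠ 0 := by exact_mod_cast hp
    refine .inr ⟨1, one_mem _, ?_⟩
    rw [bqfAct_one]
    exact Prod.ext ha.symm (Prod.ext hb.symm (Int.ediv_eq_of_eq_mul_right hp' hc.symm))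

theorem frickeOrbitRel_of_frickeRel (hp : p ≠ 0) {Q Q' : QDP d p}
    (hQQ' : frickeRel d p Q Q') : frickeOrbitRel d p Q Q' :=
  (frickeOrbitRel_equivalence hp).eqvGen_iff.mp
    (hQQ'.mono fun _ _ => frickeOrbitRel_of_frickeStep hp)

end QDP

/-- For a prime `p` and discriminant `-d` with `p ∤ d`, the natural map
`Q_{d,p,h}/Γ₀(p) → Q_{d,p}/Γ₀*(p)` is a bijection. -/
theorem stmt7 (p : ℕ) (hp : p.Prime) (d h : ℤ) (hd : 0 < d)
    (hpd : ¬ ((p : ℤ) ∣ d)) (hh : h ^ 2 ≡ -d [ZMOD 4 * p]) :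
    ∃ F : Quot (gamma0Rel d p h) → Quot (frickeRel d p),
      Function.Bijective F ∧
      ∀ Q : QDPH d (p : ℤ) h,
        F (Quot.mk _ Q) =
          Quot.mk _ (⟨Q.1, Q.2.1, Q.2.2.1, Q.2.2.2.1⟩ : QDP d p) := by
  refine ⟨Quot.lift (fun Q => Quot.mk _ Q.toQDP)
    (fun _ _ hQQ' => Quot.sound (.rel _ _ (.inl hQQ'))), ⟨?_, ?_⟩, fun _ => rfl⟩
  · rintro ⟨Q⟩ ⟨Q'⟩ hQQ'
    have hfr : frickeRel d p Q.toQDP Q'.toQDP :=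
      (Relation.EqvGen.is_equivalence _).eqvGen_iff.mp (Quot.eqvGen_exact hQQ')
    rcases frickeOrbitRel_of_frickeRel hp.ne_zero hfr with ⟨γ, hγ, hQQ'⟩ | hW
    · exact Quot.sound ⟨γ, mem_Gamma0_iff_dvd.mp hγ, hQQ'⟩
    · refine absurd (dvd_of_sq_modEq_neg_of_modEq_neg hh ?_) hpd
      calc h ≡ Q'.1.2.1 [ZMOD 2 * p] := Q'.2.2.2.2.symm
        _ ≡ -Q.1.2.1 [ZMOD 2 * p] := snd_modEq_of_bqfOrbitRel (dvd_mul_right _ _) hW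
        _ ≡ -h [ZMOD 2 * p] := Q.2.2.2.2.neg
  · rintro ⟨Q⟩
    rcases Q.snd_modEq_or_modEq_neg hp hh with hb | hb
    · exact ⟨Quot.mk _ (Q.toQDPH hb), rfl⟩
    · refine ⟨Quot.mk _ ((Q.fricke hp.pos hd).toQDPH (by rw [← neg_neg h]; exact hb.neg)), ?_⟩
      exact Quot.sound (.symm _ _ (.rel _ _ (Q.frickeStep_fricke hp.pos hd)))
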